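/- arXiv:2010.15898 — 3 statements merged into one kernel-verified Lean document; each statement's English description precedes it below -/
import Mathlib

section
/- Let U ⊆ ℝ² be an open set that is star-shaped with respect to one of its points, and let f : ℝ² → ℝ² be continuously differentiable on U. Then f is divergence-free on U (i.e., ∂₁f₁(x) + ∂₂f₂(x) = 0 for all x ∈ U) if and only if there exists a twice continuously differentiable scalar potential ψ : ℝ² → ℝ such that f(x) = L(ψ)(x) = (−∂₂ψ(x), ∂₁ψ(x)) for all x ∈ U. -/
open EuclideanSpace

/-- Partial derivative in coordinate direction `i`. -/
noncomputable def pd (i : Fin 2) (f : EuclideanSpace ℝ (Fin 2) → ℝ)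
    (x : EuclideanSpace ℝ (Fin 2)) : ℝ :=
  fderiv ℝ f x (EuclideanSpace.single i 1)

/-!
A field `f` is divergence-free exactly when the 1-form `ω = rotForm f = f₁ dx₀ - f₀ dx₁` is
closed (its derivative is symmetric), and `f = L(ψ)` exactly when `dψ = ω`. On a domain
star-shaped about `p` a closed `C¹` form has the primitive `ψ x = ∫₀¹ ω (p + t (x - p)) (x - p) dt`:
differentiating under the integral, the symmetry of `dω` turns the `x`-derivative of the integrand
into `d/dt [t ω (p + t (x - p))]`, which integrates to `ω x`. Conversely `dψ = ω` forces `dω` to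
be the second derivative of a `C²` function, which is symmetric.
-/

open Set Filter Topology MeasureTheory
open scoped Interval

theorem continuousOn_of_forall_continuousAt_prodMk {X Y Z : Type*} [TopologicalSpace X]
    [TopologicalSpace Y] [TopologicalSpace Z] {g : X × Y → Z} {x : X} {s : Set Y}
    (hg : ∀ y ∈ s, ContinuousAt g (x, y)) : ContinuousOn (fun y => g (x, y)) s :=
  continuousOn_of_forall_continuousAt fun y hy =>
    (hg y hy).comp (Continuous.prodMk_right x).continuousAt

theorem exists_eventually_forall_norm_le_of_continuousAt {X Y F : Type*} [TopologicalSpace X]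
    [TopologicalSpace Y] [NormedAddCommGroup F] {g : X × Y → F} {x₀ : X} {K : Set Y}
    (hK : IsCompact K) (hg : ∀ y ∈ K, ContinuousAt g (x₀, y)) :
    ∃ M, ∀ᶠ x in 𝓝 x₀, ∀ y ∈ K, ‖g (x, y)‖ ≤ M := by
  obtain ⟨C, hC⟩ := hK.exists_bound_of_continuousOn
    (continuousOn_of_forall_continuousAt_prodMk hg)
  refine ⟨C + 1, hK.eventually_forall_of_forall_eventually fun y hy => ?_⟩
  exact ((hg y hy).norm.eventually_lt continuousAt_const (by linarith [hC y hy])).mono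
    fun z hz => hz.le

section

variable {E F : Type*} [NormedAddCommGroup E] [NormedSpace ℝ E]
  [NormedAddCommGroup F] [NormedSpace ℝ F] {U : Set E} {p : E}

theorem IsOpen.continuousAt_comp_lineMap {G : Type*} [TopologicalSpace G] {φ : E → G}
    (hU : IsOpen U) (hφ : ContinuousOn φ U) {x : E} {t : ℝ} (h : p + t • (x - p) ∈ U) :
    ContinuousAt (fun z : E × ℝ => φ (p + z.2 • (z.1 - p))) (x, t) :=
  (hφ.continuousAt (hU.mem_nhds h)).comp (x := (x, t)) (by fun_prop)

theorem hasFDerivAt_apply_lineMap {ω : E → E →L[ℝ] F} {x : E} {t : ℝ}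
    (hω : DifferentiableAt ℝ ω (p + t • (x - p)))
    (hsymm : ∀ v w, fderiv ℝ ω (p + t • (x - p)) v w = fderiv ℝ ω (p + t • (x - p)) w v) :
    HasFDerivAt (fun x => ω (p + t • (x - p)) (x - p))
      (t • fderiv ℝ ω (p + t • (x - p)) (x - p) + ω (p + t • (x - p))) x := by
  have hγ : HasFDerivAt (fun x : E => p + t • (x - p)) (t • ContinuousLinearMap.id ℝ E) x :=
    (((hasFDerivAt_id x).sub_const p).const_smul t).const_add p
  have := (hω.hasFDerivAt.comp x hγ).clm_apply ((hasFDerivAt_id x).sub_const p)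
  refine this.congr_fderiv (ContinuousLinearMap.ext fun v => ?_)
  simp [hsymm, add_comm]

theorem hasDerivAt_smul_lineMap {ω : E → E →L[ℝ] F} {x : E} {t : ℝ}
    (hω : DifferentiableAt ℝ ω (p + t • (x - p))) :
    HasDerivAt (fun t : ℝ => t • ω (p + t • (x - p)))
      (t • fderiv ℝ ω (p + t • (x - p)) (x - p) + ω (p + t • (x - p))) t := by
  have hγ : HasDerivAt (fun t : ℝ => p + t • (x - p)) (x - p) t := by
    simpa using ((hasDerivAt_id t).smul_const (x - p)).const_add p
  have := (hasDerivAt_id' t).fun_smul (hω.hasFDerivAt.comp_hasDerivAt t hγ)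
  exact this.congr_deriv (by rw [one_smul]; rfl)

theorem integral_deriv_smul_lineMap [CompleteSpace F] {ω : E → E →L[ℝ] F} {x : E}
    (hω : ∀ t ∈ Icc (0 : ℝ) 1, DifferentiableAt ℝ ω (p + t • (x - p)))
    (hcont : ContinuousOn
      (fun t : ℝ => t • fderiv ℝ ω (p + t • (x - p)) (x - p) + ω (p + t • (x - p))) (Icc 0 1)) :
    ∫ t in (0 : ℝ)..1, (t • fderiv ℝ ω (p + t • (x - p)) (x - p) + ω (p + t • (x - p))) =
      ω x := by
  rw [intervalIntegral.integral_eq_sub_of_hasDerivAt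
    (fun t ht => hasDerivAt_smul_lineMap (hω t (by rwa [uIcc_of_le zero_le_one] at ht)))
    (hcont.intervalIntegrable_of_Icc zero_le_one)]
  simp

theorem StarConvex.hasFDerivAt_integral_apply_lineMap [CompleteSpace F] {ω : E → E →L[ℝ] F}
    (hU : IsOpen U) (hstar : StarConvex ℝ p U) (hω : ContDiffOn ℝ 1 ω U)
    (hsymm : ∀ y ∈ U, ∀ v w, fderiv ℝ ω y v w = fderiv ℝ ω y w v) {x₀ : E} (hx₀ : x₀ ∈ U) :
    HasFDerivAt (fun x => ∫ t in (0 : ℝ)..1, ω (p + t • (x - p)) (x - p)) (ω x₀) x₀ := by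
  have hmem : ∀ x ∈ U, ∀ t ∈ Icc (0 : ℝ) 1, p + t • (x - p) ∈ U :=
    fun x hx t ht => hstar.add_smul_sub_mem hx ht.1 ht.2
  have hdiff : ∀ x ∈ U, ∀ t ∈ Icc (0 : ℝ) 1, DifferentiableAt ℝ ω (p + t • (x - p)) :=
    fun x hx t ht => (hω.differentiableOn one_ne_zero).differentiableAt
      (hU.mem_nhds (hmem x hx t ht))
  have hF_cont : ∀ x ∈ U, ∀ t ∈ Icc (0 : ℝ) 1,
      ContinuousAt (fun z : E × ℝ => ω (p + z.2 • (z.1 - p)) (z.1 - p)) (x, t) :=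
    fun x hx t ht => (hU.continuousAt_comp_lineMap hω.continuousOn (hmem x hx t ht)).clm_apply
      (by fun_prop)
  have hF'_cont : ∀ t ∈ Icc (0 : ℝ) 1, ContinuousAt (fun z : E × ℝ =>
      z.2 • fderiv ℝ ω (p + z.2 • (z.1 - p)) (z.1 - p) + ω (p + z.2 • (z.1 - p))) (x₀, t) :=
    fun t ht =>
      (continuousAt_snd.smul ((hU.continuousAt_comp_lineMap
        (hω.continuousOn_fderiv_of_isOpen hU le_rfl) (hmem x₀ hx₀ t ht)).clm_apply
        (by fun_prop))).add (hU.continuousAt_comp_lineMap hω.continuousOn (hmem x₀ hx₀ t ht))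
  have hF_on := fun x hx => continuousOn_of_forall_continuousAt_prodMk (hF_cont x hx)
  have hF'_on := continuousOn_of_forall_continuousAt_prodMk hF'_cont
  have hIoc : Ι (0 : ℝ) 1 ⊆ Icc 0 1 := by
    rw [uIoc_of_le zero_le_one]; exact Ioc_subset_Icc_self
  obtain ⟨M, hM⟩ := exists_eventually_forall_norm_le_of_continuousAt isCompact_Icc hF'_cont
  have := intervalIntegral.hasFDerivAt_integral_of_dominated_of_fderiv_le (μ := volume)
    (bound := fun _ => M) (inter_mem (hU.mem_nhds hx₀) hM)
    (eventually_of_mem (hU.mem_nhds hx₀) fun x hx =>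
      ((hF_on x hx).mono hIoc).aestronglyMeasurable measurableSet_uIoc)
    ((hF_on x₀ hx₀).intervalIntegrable_of_Icc zero_le_one)
    ((hF'_on.mono hIoc).aestronglyMeasurable measurableSet_uIoc)
    (ae_of_all _ fun t ht x hx => hx.2 t (hIoc ht)) intervalIntegrable_const
    (ae_of_all _ fun t ht x hx => hasFDerivAt_apply_lineMap (hdiff x hx.1 t (hIoc ht))
      (hsymm _ (hmem x hx.1 t (hIoc ht))))
  rwa [integral_deriv_smul_lineMap (hdiff x₀ hx₀) hF'_on] at this

end

local notation "ℝ²" => EuclideanSpace ℝ (Fin 2)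

theorem clm_apply_eq_coord_mul (L : ℝ² →L[ℝ] ℝ) (v : ℝ²) :
    L v = v 0 * L (single 0 1) + v 1 * L (single 1 1) := by
  conv_lhs => rw [← (basisFun (Fin 2) ℝ).sum_repr v]
  simp [Fin.sum_univ_two]

theorem clm_ext_single {L L' : ℝ² →L[ℝ] ℝ} (h0 : L (single 0 1) = L' (single 0 1))
    (h1 : L (single 1 1) = L' (single 1 1)) : L = L' := by
  ext v; rw [clm_apply_eq_coord_mul L, clm_apply_eq_coord_mul L', h0, h1]

noncomputable def rotForm (f : ℝ² → ℝ²) (y : ℝ²) : ℝ² →L[ℝ] ℝ :=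
  f y 1 • proj 0 - f y 0 • proj 1

theorem rotForm_eq_fderiv_iff {f : ℝ² → ℝ²} {ψ : ℝ² → ℝ} {y : ℝ²} :
    rotForm f y = fderiv ℝ ψ y ↔ f y 0 = -(pd 1 ψ y) ∧ f y 1 = pd 0 ψ y := by
  constructor
  · intro h
    simp [pd, ← h, rotForm]
  · rintro ⟨h0, h1⟩
    apply clm_ext_single <;> simp [rotForm, pd, h0, h1]

theorem contDiffOn_rotForm {f : ℝ² → ℝ²} {U : Set ℝ²} {n : WithTop ℕ∞}
    (hf : ContDiffOn ℝ n f U) :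
    ContDiffOn ℝ n (rotForm f) U :=
  (((proj 1 : ℝ² →L[ℝ] ℝ).contDiff.comp_contDiffOn hf).smul contDiffOn_const).sub
    (((proj 0 : ℝ² →L[ℝ] ℝ).contDiff.comp_contDiffOn hf).smul contDiffOn_const)

theorem fderiv_rotForm_apply {f : ℝ² → ℝ²} {y : ℝ²} (hf : DifferentiableAt ℝ f y) (v w : ℝ²) :
    fderiv ℝ (rotForm f) y v w =
      fderiv ℝ (fun y => f y 1) y v * w 0 - fderiv ℝ (fun y => f y 0) y v * w 1 := by
  have hcoord : ∀ i, HasFDerivAt (fun y => f y i) (fderiv ℝ (fun y => f y i) y) y := fun i =>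
    ((proj i : ℝ² →L[ℝ] ℝ).differentiableAt.comp y hf).hasFDerivAt
  have h : HasFDerivAt (rotForm f) _ y :=
    ((hcoord 1).smul_const (proj 0 : ℝ² →L[ℝ] ℝ)).sub
      ((hcoord 0).smul_const (proj 1 : ℝ² →L[ℝ] ℝ))
  simp [h.fderiv]

theorem fderiv_rotForm_symm_iff {f : ℝ² → ℝ²} {y : ℝ²} (hf : DifferentiableAt ℝ f y) :
    (∀ v w, fderiv ℝ (rotForm f) y v w = fderiv ℝ (rotForm f) y w v) ↔
      pd 0 (fun y => f y 0) y + pd 1 (fun y => f y 1) y = 0 := by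
  simp only [fderiv_rotForm_apply hf, pd]
  constructor
  · intro h
    have h01 := h (single 0 1) (single 1 1)
    simp only [PiLp.single_eq_same, PiLp.single_eq_of_ne, ne_eq, zero_ne_one, one_ne_zero,
      not_false_eq_true, mul_zero, mul_one, zero_sub, sub_zero] at h01
    linear_combination -h01
  · intro h v w
    simp only [clm_apply_eq_coord_mul _ v, clm_apply_eq_coord_mul _ w]
    linear_combination (v 1 * w 0 - v 0 * w 1) * h

theorem divfree_iff_exists_potential_general
    (U : Set (EuclideanSpace ℝ (Fin 2))) (hU : IsOpen U)
    (p : EuclideanSpace ℝ (Fin 2))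
    (hstar : ∀ x ∈ U, segment ℝ p x ⊆ U)
    (f : EuclideanSpace ℝ (Fin 2) → EuclideanSpace ℝ (Fin 2))
    (hf : ContDiffOn ℝ 1 f U) :
    (∀ x ∈ U, pd 0 (fun y => f y 0) x + pd 1 (fun y => f y 1) x = 0) ↔
      ∃ ψ : EuclideanSpace ℝ (Fin 2) → ℝ, ContDiffOn ℝ 2 ψ U ∧
        ∀ x ∈ U, f x 0 = -(pd 1 ψ x) ∧ f x 1 = pd 0 ψ x := by
  have hdiff : ∀ y ∈ U, DifferentiableAt ℝ f y := fun y hy =>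
    (hf.differentiableOn one_ne_zero).differentiableAt (hU.mem_nhds hy)
  constructor
  · intro hdiv
    have hψ := fun x (hx : x ∈ U) =>
      (starConvex_iff_segment_subset.2 fun y hy => hstar y hy).hasFDerivAt_integral_apply_lineMap
        hU (contDiffOn_rotForm hf)
        (fun y hy => (fderiv_rotForm_symm_iff (hdiff y hy)).2 (hdiv y hy)) hx
    refine ⟨_, ?_, fun x hx => rotForm_eq_fderiv_iff.1 (hψ x hx).fderiv.symm⟩
    show ContDiffOn ℝ (1 + 1) _ U
    exact (contDiffOn_succ_iff_hasFDerivWithinAt_of_uniqueDiffOn hU.uniqueDiffOn).2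
      ⟨by simp, rotForm f, contDiffOn_rotForm hf, fun x hx => (hψ x hx).hasFDerivWithinAt⟩
  · rintro ⟨ψ, hψ, hfψ⟩ x hx
    have heq : rotForm f =ᶠ[𝓝 x] fderiv ℝ ψ :=
      eventually_of_mem (hU.mem_nhds hx) fun y hy => rotForm_eq_fderiv_iff.2 (hfψ y hy)
    rw [← fderiv_rotForm_symm_iff (hdiff x hx), heq.fderiv_eq]
    exact (hψ.contDiffAt (hU.mem_nhds hx)).isSymmSndFDerivAt (by simp)

/-- Poincaré's Lemma in the plane: on an open star-shaped set, a C¹ vector field is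
divergence-free iff it is the rotated gradient `L(ψ) = (−∂₂ψ, ∂₁ψ)` of a C² potential. -/
theorem divfree_iff_exists_potential
    (U : Set (EuclideanSpace ℝ (Fin 2))) (hU : IsOpen U)
    (p : EuclideanSpace ℝ (Fin 2)) (hp : p ∈ U)
    (hstar : ∀ x ∈ U, segment ℝ p x ⊆ U)
    (f : EuclideanSpace ℝ (Fin 2) → EuclideanSpace ℝ (Fin 2))
    (hf : ContDiffOn ℝ 1 f U) :
    (∀ x ∈ U, pd 0 (fun y => f y 0) x + pd 1 (fun y => f y 1) x = 0) ↔
      ∃ ψ : EuclideanSpace ℝ (Fin 2) → ℝ, ContDiffOn ℝ 2 ψ U ∧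
        ∀ x ∈ U, f x 0 = -(pd 1 ψ x) ∧ f x 1 = pd 0 ψ x :=
  divfree_iff_exists_potential_general U hU p hstar f hf
end

section
/- Let U ⊆ ℝ^d be an open set that is star-shaped with respect to one of its points, and let f : ℝ^d → ℝ^d be continuously differentiable on U. Then the Jacobian of f is symmetric at every point of U (i.e., for all x ∈ U and all vectors v, w, ⟨Df(x)v, w⟩ = ⟨Df(x)w, v⟩, which is the curl-free condition) if and only if there exists a scalar potential φ : ℝ^d → ℝ, twice continuously differentiable on U, such that f(x) = ∇φ(x) for all x ∈ U. -/
/-!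
For the nontrivial direction, take the radial potential
`φ x = ∫₀¹ ⟪f (p + t (x - p)), x - p⟫ dt`, defined on `U` because `U` is star-shaped about `p`.
Differentiating under the integral sign, the derivative of the integrand in `x` is, thanks to the
symmetry of `Df`, the `t`-derivative of `t • f (p + t (x - p))`, so `∇φ x = f x`.
Conversely, the Jacobian of `∇φ` is the Hessian of `φ`, which is symmetric by Schwarz's theorem.
-/

open Set Filter Topology MeasureTheory intervalIntegral InnerProductSpace RealInnerProductSpace

theorem IsCompact.exists_eventually_forall_norm_le {α β X : Type*} [TopologicalSpace α]
    [TopologicalSpace β] [SeminormedAddGroup X] {K : Set α} (hK : IsCompact K) {g : β → α → X}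
    {x : β} (hg : ∀ t ∈ K, ContinuousAt (Function.uncurry g) (x, t)) :
    ∃ M, ∀ᶠ y in 𝓝 x, ∀ t ∈ K, ‖g y t‖ ≤ M := by
  obtain ⟨M, hM⟩ := hK.exists_bound_of_continuousOn (f := g x) fun t ht =>
    ((hg t ht).comp (f := fun s => (x, s)) (by fun_prop)).continuousWithinAt
  refine ⟨M + 1, hK.eventually_forall_of_forall_eventually fun t ht => ?_⟩
  exact (hg t ht).norm.eventually (ge_mem_nhds ((hM t ht).trans_lt (lt_add_one M)))

section RadialPotential

variable {E F : Type*} [NormedAddCommGroup E] [NormedSpace ℝ E] [NormedAddCommGroup F]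
  [NormedSpace ℝ F] {ω : E → E →L[ℝ] F} {U : Set E} {p x : E} {t : ℝ}

theorem contDiffOn_succ_of_hasFDerivAt {f : E → F} {f' : E → E →L[ℝ] F} {n : ℕ}
    (hU : IsOpen U) (hf' : ContDiffOn ℝ n f' U) (hf : ∀ x ∈ U, HasFDerivAt f (f' x) x) :
    ContDiffOn ℝ (n + 1) f U := by
  rw [contDiffOn_succ_iff_fderiv_of_isOpen hU]
  exact ⟨fun x hx => (hf x hx).differentiableAt.differentiableWithinAt, by simp,
    hf'.congr fun x hx => (hf x hx).fderiv⟩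

theorem ContinuousOn.continuousAt_comp_ray {G : Type*} [TopologicalSpace G] {g : E → G}
    (hg : ContinuousOn g U) (hU : IsOpen U) (hx : p + t • (x - p) ∈ U) :
    ContinuousAt (fun q : E × ℝ => g (p + q.2 • (q.1 - p))) (x, t) :=
  (hg.continuousAt (hU.mem_nhds hx)).comp (f := fun q : E × ℝ => p + q.2 • (q.1 - p))
    (by fun_prop)

theorem hasFDerivAt_radialIntegrand (hω : DifferentiableAt ℝ ω (p + t • (x - p)))
    (hsymm : ∀ v w, fderiv ℝ ω (p + t • (x - p)) v w = fderiv ℝ ω (p + t • (x - p)) w v) :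
    HasFDerivAt (fun y => ω (p + t • (y - p)) (y - p))
      (ω (p + t • (x - p)) + t • fderiv ℝ ω (p + t • (x - p)) (x - p)) x := by
  have hray : HasFDerivAt (fun y => p + t • (y - p)) (t • ContinuousLinearMap.id ℝ E) x :=
    (((hasFDerivAt_id x).sub_const p).const_smul t).const_add p
  refine (hω.hasFDerivAt.comp x hray).clm_apply ((hasFDerivAt_id x).sub_const p)
    |>.congr_fderiv ?_
  ext v
  simp [hsymm v]

theorem hasDerivAt_smul_comp_ray (hω : DifferentiableAt ℝ ω (p + t • (x - p))) :
    HasDerivAt (fun s : ℝ => s • ω (p + s • (x - p)))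
      (ω (p + t • (x - p)) + t • fderiv ℝ ω (p + t • (x - p)) (x - p)) t := by
  have hray : HasDerivAt (fun s : ℝ => p + s • (x - p)) (x - p) t := by
    simpa using ((hasDerivAt_id t).smul_const (x - p)).const_add p
  refine ((hasDerivAt_id t).smul (hω.hasFDerivAt.comp_hasDerivAt t hray)).congr_deriv ?_
  simp [add_comm]

variable [CompleteSpace F]

noncomputable def radialPotential (ω : E → E →L[ℝ] F) (p x : E) : F :=
  ∫ t in (0 : ℝ)..1, ω (p + t • (x - p)) (x - p)

theorem integral_deriv_smul_comp_ray
    (hω : ∀ t ∈ uIcc (0 : ℝ) 1, DifferentiableAt ℝ ω (p + t • (x - p)))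
    (hint : IntervalIntegrable
      (fun t : ℝ => ω (p + t • (x - p)) + t • fderiv ℝ ω (p + t • (x - p)) (x - p)) volume 0 1) :
    ∫ t in (0 : ℝ)..1, (ω (p + t • (x - p)) + t • fderiv ℝ ω (p + t • (x - p)) (x - p)) = ω x := by
  rw [integral_eq_sub_of_hasDerivAt (fun t ht => hasDerivAt_smul_comp_ray (hω t ht)) hint]
  simp

theorem StarConvex.hasFDerivAt_radialPotential (hstar : StarConvex ℝ p U) (hU : IsOpen U)
    (hω : ContDiffOn ℝ 1 ω U) (hdω : ∀ z ∈ U, ∀ v w, fderiv ℝ ω z v w = fderiv ℝ ω z w v)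
    (hx : x ∈ U) : HasFDerivAt (radialPotential ω p) (ω x) x := by
  set D : E → ℝ → E →L[ℝ] F :=
    fun y t => ω (p + t • (y - p)) + t • fderiv ℝ ω (p + t • (y - p)) (y - p)
  have hωd := hω.differentiableOn one_ne_zero
  have hray : ∀ y ∈ U, ∀ t ∈ uIcc (0 : ℝ) 1, p + t • (y - p) ∈ U := fun y hy t ht => by
    rw [uIcc_of_le zero_le_one] at ht
    exact hstar.add_smul_sub_mem hy ht.1 ht.2
  have hDc : ∀ t ∈ uIcc (0 : ℝ) 1, ContinuousAt (Function.uncurry D) (x, t) := fun t ht =>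
    have hxt := hray x hx t ht
    (hω.continuousOn.continuousAt_comp_ray hU hxt).add <| continuousAt_snd.smul <|
      ((hω.continuousOn_fderiv_of_isOpen hU le_rfl).continuousAt_comp_ray hU hxt).clm_apply
        (by fun_prop)
  have hIc : ∀ y ∈ U, ContinuousOn (fun t : ℝ => ω (p + t • (y - p)) (y - p)) (uIcc 0 1) :=
    fun y hy t ht => ((hω.continuousOn.continuousAt_comp_ray hU (hray y hy t ht)).clm_apply
      continuousAt_const).comp (f := fun s => (y, s)) (by fun_prop) |>.continuousWithinAt
  have hDxc : ContinuousOn (D x) (uIcc 0 1) := fun t ht =>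
    (hDc t ht).comp (f := fun s => (x, s)) (by fun_prop) |>.continuousWithinAt
  obtain ⟨M, hM⟩ := isCompact_uIcc.exists_eventually_forall_norm_le hDc
  have hderiv : HasFDerivAt (radialPotential ω p) (∫ t in (0 : ℝ)..1, D x t) x := by
    refine hasFDerivAt_integral_of_dominated_of_fderiv_le (bound := fun _ => M)
      (hM.and (hU.mem_nhds hx)) ?_ ?_ ?_ ?_ intervalIntegrable_const ?_
    · filter_upwards [hU.mem_nhds hx] with y hy
      exact (hIc y hy).mono uIoc_subset_uIcc |>.aestronglyMeasurable measurableSet_uIoc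
    · exact (hIc x hx).intervalIntegrable
    · exact hDxc.mono uIoc_subset_uIcc |>.aestronglyMeasurable measurableSet_uIoc
    · exact .of_forall fun t ht y hy => hy.1 t (uIoc_subset_uIcc ht)
    · refine .of_forall fun t ht y hy => ?_
      have hyt := hray y hy.2 t (uIoc_subset_uIcc ht)
      exact hasFDerivAt_radialIntegrand (hωd.differentiableAt (hU.mem_nhds hyt)) (hdω _ hyt)
  rwa [integral_deriv_smul_comp_ray (fun t ht => hωd.differentiableAt
    (hU.mem_nhds (hray x hx t ht))) hDxc.intervalIntegrable] at hderiv

end RadialPotential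

section Gradient

variable {E : Type*} [NormedAddCommGroup E] [InnerProductSpace ℝ E] [CompleteSpace E]

theorem inner_fderiv_gradient_comm {φ : E → ℝ} {x : E} (hφ : ContDiffAt ℝ 2 φ x) (v w : E) :
    ⟪fderiv ℝ (gradient φ) x v, w⟫ = ⟪fderiv ℝ (gradient φ) x w, v⟫ := by
  have hgrad : gradient φ = (toDual ℝ E).symm ∘ fderiv ℝ φ := rfl
  rw [hgrad, LinearIsometryEquiv.comp_fderiv]
  change ⟪(toDual ℝ E).symm _, w⟫ = ⟪(toDual ℝ E).symm _, v⟫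
  rw [toDual_symm_apply, toDual_symm_apply]
  exact hφ.isSymmSndFDerivAt (by simp) v w

theorem fderiv_toDual_comp_apply {f : E → E} {x : E} (v w : E) :
    fderiv ℝ (toDual ℝ E ∘ f) x v w = ⟪fderiv ℝ f x v, w⟫ := by
  rw [LinearIsometryEquiv.comp_fderiv]
  rfl

end Gradient

theorem curlfree_iff_exists_potential_general (d : ℕ)
    (U : Set (EuclideanSpace ℝ (Fin d))) (hU : IsOpen U)
    (p : EuclideanSpace ℝ (Fin d))
    (hstar : ∀ x ∈ U, segment ℝ p x ⊆ U)
    (f : EuclideanSpace ℝ (Fin d) → EuclideanSpace ℝ (Fin d))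
    (hf : ContDiffOn ℝ 1 f U) :
    (∀ x ∈ U, ∀ v w : EuclideanSpace ℝ (Fin d),
        ⟪fderiv ℝ f x v, w⟫ = ⟪fderiv ℝ f x w, v⟫) ↔
      ∃ φ : EuclideanSpace ℝ (Fin d) → ℝ, ContDiffOn ℝ 2 φ U ∧
        ∀ x ∈ U, f x = gradient φ x := by
  constructor
  · intro hsymm
    have hω : ContDiffOn ℝ 1 (toDual ℝ _ ∘ f) U := (toDual ℝ _).contDiff.comp_contDiffOn hf
    have hpot : ∀ x ∈ U, HasFDerivAt (radialPotential (toDual ℝ _ ∘ f) p) (toDual ℝ _ (f x)) x :=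
      fun x hx => (starConvex_iff_segment_subset.2 hstar).hasFDerivAt_radialPotential hU hω
        (fun z hz v w => by simpa only [fderiv_toDual_comp_apply] using hsymm z hz v w) hx
    exact ⟨_, contDiffOn_succ_of_hasFDerivAt (n := 1) hU hω hpot,
      fun x hx => (hasGradientAt_iff_hasFDerivAt.2 (hpot x hx)).gradient.symm⟩
  · rintro ⟨φ, hφ, hgrad⟩ x hx v w
    have hfx : f =ᶠ[𝓝 x] gradient φ := eventually_of_mem (hU.mem_nhds hx) hgrad
    rw [hfx.fderiv_eq]
    exact inner_fderiv_gradient_comm (hφ.contDiffAt (hU.mem_nhds hx)) v w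

/-- Poincaré's Lemma for curl-free fields in `ℝᵈ`: on an open star-shaped set, a C¹ vector
field has symmetric Jacobian everywhere (is curl-free) iff it is the gradient of a scalar
potential that is C² on the set. -/
theorem curlfree_iff_exists_potential (d : ℕ)
    (U : Set (EuclideanSpace ℝ (Fin d))) (hU : IsOpen U)
    (p : EuclideanSpace ℝ (Fin d)) (hp : p ∈ U)
    (hstar : ∀ x ∈ U, segment ℝ p x ⊆ U)
    (f : EuclideanSpace ℝ (Fin d) → EuclideanSpace ℝ (Fin d))
    (hf : ContDiffOn ℝ 1 f U) :
    (∀ x ∈ U, ∀ v w : EuclideanSpace ℝ (Fin d),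
        ⟪fderiv ℝ f x v, w⟫ = ⟪fderiv ℝ f x w, v⟫) ↔
      ∃ φ : EuclideanSpace ℝ (Fin d) → ℝ, ContDiffOn ℝ 2 φ U ∧
        ∀ x ∈ U, f x = gradient φ x :=
  curlfree_iff_exists_potential_general d U hU p hstar f hf
end

section
/- Let Ω ⊆ ℝ^d be open and x ∈ Ω. Let Ω₁, …, Ω_M ⊆ ℝ^d be open patches, and let w₁, …, w_M : ℝ^d → ℝ be differentiable with Σ_{ℓ=1}^M w_ℓ ≡ 1 on Ω, w_ℓ ≥ 0, and with the closed support of w_ℓ contained in Ω_ℓ (so w_ℓ and ∇w_ℓ vanish outside Ω_ℓ); assume ‖∇w_ℓ(x)‖ ≤ C_ℓ. Let φ₁, …, φ_M : ℝ^d → ℝ be differentiable, let u(x) ∈ ℝ^d, and suppose ‖u(x) − ∇φ_ℓ(x)‖ ≤ E_ℓ for every ℓ with x ∈ Ω_ℓ. Fix any k with x ∈ Ω_k and suppose |φ_ℓ(x) − φ_k(x)| ≤ δ_ℓ for every ℓ with x ∈ Ω_ℓ. Then the curl-free partition-of-unity approximant s̃ = ∇( Σ_{ℓ=1}^M w_ℓ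 φ_ℓ ) satisfies ‖u(x) − s̃(x)‖ ≤ max { E_ℓ : x ∈ Ω_ℓ } + Σ_{ℓ : x ∈ Ω_ℓ} C_ℓ δ_ℓ. -/
open scoped Classical

/-
Near `x` the weights sum to one, so their gradients sum to zero there; hence in
`∇(Σ w φ) = Σ w ∇φ + Σ φ ∇w` the second sum is unchanged when every `φ ℓ x` is replaced by
`φ ℓ x - φ k x`. The first sum is a convex combination of the `∇φ ℓ x` over the patches
containing `x`, so it lies within `max E` of `u`, and the second is bounded term by term.
-/

section ConvexBlend

variable {ι V : Type*} [SeminormedAddCommGroup V] [NormedSpace ℝ V]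

theorem norm_sub_sum_smul_add_smul_le {s : Finset ι} {a p C δ : ι → ℝ} {D g : ι → V}
    {v : V} {c B : ℝ} (ha : ∀ i ∈ s, 0 ≤ a i) (ha_sum : ∑ i ∈ s, a i = 1)
    (hg_sum : ∑ i ∈ s, g i = 0) (hD : ∀ i ∈ s, ‖v - D i‖ ≤ B)
    (hg : ∀ i ∈ s, ‖g i‖ ≤ C i) (hp : ∀ i ∈ s, |p i - c| ≤ δ i) :
    ‖v - ∑ i ∈ s, (a i • D i + p i • g i)‖ ≤ B + ∑ i ∈ s, C i * δ i := by
  have h_shift : ∑ i ∈ s, p i • g i = ∑ i ∈ s, (p i - c) • g i := by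
    simp only [sub_smul, Finset.sum_sub_distrib, ← Finset.smul_sum, hg_sum, smul_zero, sub_zero]
  have h_convex : ‖v - ∑ i ∈ s, a i • D i‖ ≤ B := by
    have := (convex_closedBall v B).sum_mem ha ha_sum fun i hi => by
      simpa [dist_eq_norm, norm_sub_rev] using hD i hi
    simpa [dist_eq_norm, norm_sub_rev] using this
  have h_shifted : ‖∑ i ∈ s, (p i - c) • g i‖ ≤ ∑ i ∈ s, C i * δ i := by
    refine (norm_sum_le _ _).trans (Finset.sum_le_sum fun i hi => ?_)
    rw [norm_smul, Real.norm_eq_abs, mul_comm]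
    exact mul_le_mul (hg i hi) (hp i hi) (abs_nonneg _) ((norm_nonneg _).trans (hg i hi))
  calc ‖v - ∑ i ∈ s, (a i • D i + p i • g i)‖
      = ‖(v - ∑ i ∈ s, a i • D i) - ∑ i ∈ s, (p i - c) • g i‖ := by
        rw [Finset.sum_add_distrib, h_shift, sub_add_eq_sub_sub]
    _ ≤ B + ∑ i ∈ s, C i * δ i :=
        (norm_sub_le _ _).trans (add_le_add h_convex h_shifted)

end ConvexBlend

section Gradient

variable {E ι : Type*} [NormedAddCommGroup E] [InnerProductSpace ℝ E] [CompleteSpace E]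
  {f g : E → ℝ} {f' g' x : E}

theorem gradient_of_notMem_tsupport (h : x ∉ tsupport f) : gradient f x = 0 := by
  simp [gradient, fderiv_of_notMem_tsupport ℝ h]

theorem HasGradientAt.mul (hf : HasGradientAt f f' x) (hg : HasGradientAt g g' x) :
    HasGradientAt (fun y => f y * g y) (f x • g' + g x • f') x := by
  rw [hasGradientAt_iff_hasFDerivAt, map_add, map_smul, map_smul]
  exact hf.hasFDerivAt.mul hg.hasFDerivAt

theorem HasGradientAt.fun_sum {s : Finset ι} {A : ι → E → ℝ} {A' : ι → E}
    (h : ∀ i ∈ s, HasGradientAt (A i) (A' i) x) :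
    HasGradientAt (fun y => ∑ i ∈ s, A i y) (∑ i ∈ s, A' i) x := by
  rw [hasGradientAt_iff_hasFDerivAt, map_sum]
  exact HasFDerivAt.fun_sum h

theorem gradient_sum_mul {s : Finset ι} {w φ : ι → E → ℝ}
    (hw : ∀ i ∈ s, DifferentiableAt ℝ (w i) x) (hφ : ∀ i ∈ s, DifferentiableAt ℝ (φ i) x) :
    gradient (fun y => ∑ i ∈ s, w i y * φ i y) x =
      ∑ i ∈ s, (w i x • gradient (φ i) x + φ i x • gradient (w i) x) :=
  (HasGradientAt.fun_sum fun i hi =>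
    (hw i hi).hasGradientAt.mul (hφ i hi).hasGradientAt).gradient

theorem sum_gradient_eq_zero_of_sum_eq_one {s : Finset ι} {w : ι → E → ℝ} {U : Set E}
    (hU : U ∈ nhds x) (hw : ∀ i ∈ s, DifferentiableAt ℝ (w i) x)
    (h_sum : ∀ y ∈ U, ∑ i ∈ s, w i y = 1) :
    ∑ i ∈ s, gradient (w i) x = 0 := by
  have h_const : (fun y => ∑ i ∈ s, w i y) =ᶠ[nhds x] fun _ => (1 : ℝ) :=
    Filter.eventuallyEq_of_mem hU h_sum
  rw [← (HasGradientAt.fun_sum fun i hi => (hw i hi).hasGradientAt).gradient,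
    h_const.gradient_eq, gradient_fun_const]

end Gradient

theorem curlfree_pum_pointwise_error_general (d M : ℕ)
    (Ω : Set (EuclideanSpace ℝ (Fin d))) (hΩ : IsOpen Ω)
    (x : EuclideanSpace ℝ (Fin d)) (hx : x ∈ Ω)
    (Ωp : Fin M → Set (EuclideanSpace ℝ (Fin d)))
    (w : Fin M → EuclideanSpace ℝ (Fin d) → ℝ)
    (hw_diff : ∀ ℓ, Differentiable ℝ (w ℓ))
    (hw_sum : ∀ y ∈ Ω, ∑ ℓ, w ℓ y = 1)
    (hw_nonneg : ∀ ℓ y, 0 ≤ w ℓ y)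
    (hw_supp : ∀ ℓ, tsupport (w ℓ) ⊆ Ωp ℓ)
    (C : Fin M → ℝ) (hC : ∀ ℓ, ‖gradient (w ℓ) x‖ ≤ C ℓ)
    (φ : Fin M → EuclideanSpace ℝ (Fin d) → ℝ)
    (hφ : ∀ ℓ, Differentiable ℝ (φ ℓ))
    (u : EuclideanSpace ℝ (Fin d))
    (E : Fin M → ℝ)
    (hE : ∀ ℓ, x ∈ Ωp ℓ → ‖u - gradient (φ ℓ) x‖ ≤ E ℓ)
    (k : Fin M) (hk : x ∈ Ωp k)
    (δ : Fin M → ℝ)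
    (hδ : ∀ ℓ, x ∈ Ωp ℓ → |φ ℓ x - φ k x| ≤ δ ℓ) :
    ‖u - gradient (fun y => ∑ ℓ, w ℓ y * φ ℓ y) x‖ ≤
      (Finset.univ.filter fun ℓ => x ∈ Ωp ℓ).sup'
          ⟨k, Finset.mem_filter.mpr ⟨Finset.mem_univ k, hk⟩⟩ E +
        ∑ ℓ ∈ Finset.univ.filter fun ℓ => x ∈ Ωp ℓ, C ℓ * δ ℓ := by
  set S := Finset.univ.filter fun ℓ => x ∈ Ωp ℓ
  have h_off : ∀ ℓ ∉ S, x ∉ tsupport (w ℓ) := fun ℓ hℓ hxℓ =>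
    hℓ (Finset.mem_filter.mpr ⟨Finset.mem_univ ℓ, hw_supp ℓ hxℓ⟩)
  have h_restrict {V : Type} [AddCommMonoid V] (f : Fin M → V)
      (hf : ∀ ℓ ∉ S, f ℓ = 0) : ∑ ℓ, f ℓ = ∑ ℓ ∈ S, f ℓ :=
    (Finset.sum_subset (Finset.subset_univ S) fun ℓ _ hℓ => hf ℓ hℓ).symm
  have hw_sum_S : ∑ ℓ ∈ S, w ℓ x = 1 := by
    rw [← h_restrict _ fun ℓ hℓ => image_eq_zero_of_notMem_tsupport (h_off ℓ hℓ), hw_sum x hx]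
  have hgrad_sum_S : ∑ ℓ ∈ S, gradient (w ℓ) x = 0 := by
    rw [← h_restrict _ fun ℓ hℓ => gradient_of_notMem_tsupport (h_off ℓ hℓ)]
    exact sum_gradient_eq_zero_of_sum_eq_one (hΩ.mem_nhds hx)
      (fun ℓ _ => (hw_diff ℓ).differentiableAt) hw_sum
  rw [gradient_sum_mul (fun ℓ _ => (hw_diff ℓ).differentiableAt)
      (fun ℓ _ => (hφ ℓ).differentiableAt),
    h_restrict _ fun ℓ hℓ => by
      simp [image_eq_zero_of_notMem_tsupport (h_off ℓ hℓ),
        gradient_of_notMem_tsupport (h_off ℓ hℓ)]]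
  exact norm_sub_sum_smul_add_smul_le (fun ℓ _ => hw_nonneg ℓ x) hw_sum_S hgrad_sum_S
    (fun ℓ hℓ => (hE ℓ (Finset.mem_filter.mp hℓ).2).trans (Finset.le_sup' E hℓ))
    (fun ℓ _ => hC ℓ) (fun ℓ hℓ => hδ ℓ (Finset.mem_filter.mp hℓ).2)

/-- Pointwise error estimate for the curl-free partition-of-unity approximant
`s̃ = ∇(Σ_ℓ w_ℓ φ_ℓ)` in `ℝᵈ` (Theorem 4.2, Euclidean curl-free form): local interpolation
errors `E ℓ`, weight-gradient bounds `C ℓ`, and potential mismatches `δ ℓ` combine to give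
`‖u − s̃(x)‖ ≤ max{E ℓ : x ∈ Ω ℓ} + Σ_{ℓ : x ∈ Ω ℓ} C ℓ * δ ℓ`. -/
theorem curlfree_pum_pointwise_error (d M : ℕ)
    (Ω : Set (EuclideanSpace ℝ (Fin d))) (hΩ : IsOpen Ω)
    (x : EuclideanSpace ℝ (Fin d)) (hx : x ∈ Ω)
    (Ωp : Fin M → Set (EuclideanSpace ℝ (Fin d))) (hΩp : ∀ ℓ, IsOpen (Ωp ℓ))
    (w : Fin M → EuclideanSpace ℝ (Fin d) → ℝ)
    (hw_diff : ∀ ℓ, Differentiable ℝ (w ℓ))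
    (hw_sum : ∀ y ∈ Ω, ∑ ℓ, w ℓ y = 1)
    (hw_nonneg : ∀ ℓ y, 0 ≤ w ℓ y)
    (hw_supp : ∀ ℓ, tsupport (w ℓ) ⊆ Ωp ℓ)
    (C : Fin M → ℝ) (hC : ∀ ℓ, ‖gradient (w ℓ) x‖ ≤ C ℓ)
    (φ : Fin M → EuclideanSpace ℝ (Fin d) → ℝ)
    (hφ : ∀ ℓ, Differentiable ℝ (φ ℓ))
    (u : EuclideanSpace ℝ (Fin d))
    (E : Fin M → ℝ)
    (hE : ∀ ℓ, x ∈ Ωp ℓ → ‖u - gradient (φ ℓ) x‖ ≤ E ℓ)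
    (k : Fin M) (hk : x ∈ Ωp k)
    (δ : Fin M → ℝ)
    (hδ : ∀ ℓ, x ∈ Ωp ℓ → |φ ℓ x - φ k x| ≤ δ ℓ) :
    ‖u - gradient (fun y => ∑ ℓ, w ℓ y * φ ℓ y) x‖ ≤
      (Finset.univ.filter fun ℓ => x ∈ Ωp ℓ).sup'
          ⟨k, Finset.mem_filter.mpr ⟨Finset.mem_univ k, hk⟩⟩ E +
        ∑ ℓ ∈ Finset.univ.filter fun ℓ => x ∈ Ωp ℓ, C ℓ * δ ℓ :=
  curlfree_pum_pointwise_error_general d M Ω hΩ x hx Ωp w hw_diff hw_sum hw_nonneg hw_supp C hC φ hφ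
    u E hE k hk δ hδ
end
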